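/- Let (X_1,U_1),...,(X_n,U_n),(X_{n+1},U_{n+1}) be i.i.d. random pairs with values in ℝ^d × ℝ, let u_θ : ℝ^d → ℝ be a fixed measurable predictor, let σ : ℝ^d → ℝ be a fixed measurable function with σ(x) > 0 for all x, and fix α ∈ (0,1) with k := ⌈(1−α)(n+1)⌉ ≤ n. Define scaled nonconformity scores s_i = |U_i − u_θ(X_i)| / σ(X_i) for i = 1,...,n and let q be the k-th smallest value among s_1,...,s_n. Then the scaled conformal prediction interval I(x) = [u_θ(x) − q σ(x), u_θ(x) + q σ(x)] satisfies P( U_{n+1} ∈ I(X_{n+1}) ) ≥ 1 − α. -/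

import Mathlib

open MeasureTheory ProbabilityTheory

/-- The `k`-th smallest value among `f 0, ..., f (n-1)` (the `k`-th order statistic). -/
noncomputable def kthSmallest {n : ℕ} (k : ℕ) (f : Fin n → ℝ) : ℝ :=
  sInf {t : ℝ | k ≤ (Finset.univ.filter fun i => f i ≤ t).card}

/-!
Covering `U_{n+1}` means that the test score is at most the `k`-th smallest calibration score,
i.e. that fewer than `k` of all `n + 1` scores lie strictly below the test score. The scores are
i.i.d., so their joint law is invariant under permutations of the indices and each of them has
the same probability `p` of having strict rank `< k`. In every realisation at least `k` scores
have strict rank `< k`, so summing over the indices gives `(n + 1) p ≥ k`, and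
`k / (n + 1) ≥ 1 - α` by the choice of `k`.
-/

open Finset
open scoped ENNReal

theorem abs_sub_div_le_iff {u m s q : ℝ} (hs : 0 < s) :
    |u - m| / s ≤ q ↔ m - q * s ≤ u ∧ u ≤ m + q * s := by
  rw [div_le_iff₀ hs, abs_sub_le_iff]
  constructor <;> rintro ⟨h₁, h₂⟩ <;> constructor <;> linarith

theorem ENNReal.ofReal_le_natCeil_mul_div (x : ℝ) {N : ℕ} (hN : 0 < N) :
    ENNReal.ofReal x ≤ (⌈x * N⌉₊ : ℝ≥0∞) / N := by
  have hN' : (0 : ℝ) < N := by exact_mod_cast hN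
  calc ENNReal.ofReal x ≤ ENNReal.ofReal (⌈x * N⌉₊ / N) :=
        ENNReal.ofReal_le_ofReal ((le_div_iff₀ hN').2 (Nat.le_ceil _))
    _ = (⌈x * N⌉₊ : ℝ≥0∞) / N := by
      rw [ENNReal.ofReal_div_of_pos hN', ENNReal.ofReal_natCast, ENNReal.ofReal_natCast]

theorem le_kthSmallest_iff {n k : ℕ} (hk₀ : 1 ≤ k) (hkn : k ≤ n) (f : Fin n → ℝ) (u : ℝ) :
    u ≤ kthSmallest k f ↔ #{i | f i < u} < k := by
  set T := {t : ℝ | k ≤ #{i | f i ≤ t}}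
  obtain ⟨M, hM⟩ := (Set.finite_range f).bddAbove
  obtain ⟨m, hm⟩ := (Set.finite_range f).bddBelow
  have hTne : T.Nonempty := ⟨M, by
    simpa [T, filter_true_of_mem fun i _ => hM (Set.mem_range_self i)] using hkn⟩
  have hTbdd : BddBelow T := ⟨m, fun t ht => by
    obtain ⟨i, hi⟩ := card_pos.1 (hk₀.trans ht)
    exact (hm (Set.mem_range_self i)).trans (mem_filter.1 hi).2⟩
  rw [kthSmallest, le_csInf_iff hTbdd hTne]
  constructor
  · intro h
    by_contra! hc
    obtain ⟨i₀, hi₀, hmax⟩ := exists_max_image {i | f i < u} f (card_pos.1 (hk₀.trans hc))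
    have hi₀T : f i₀ ∈ T :=
      hc.trans (card_le_card fun i hi => mem_filter.2 ⟨mem_univ _, hmax i hi⟩)
    exact (h _ hi₀T).not_gt (mem_filter.1 hi₀).2
  · intro hc t ht
    by_contra! htu
    exact (ht.trans (card_le_card fun i hi =>
      mem_filter.2 ⟨mem_univ _, (mem_filter.1 hi).2.trans_lt htu⟩)).not_gt hc

namespace Conformal

variable {ι β : Type*} [Fintype ι]

noncomputable def strictRank [LinearOrder β] (f : ι → β) (j : ι) : ℕ :=
  #{i | f i < f j}

theorem strictRank_comp_equiv [LinearOrder β] (f : ι → β) (e : ι ≃ ι) (j : ι) :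
    strictRank (f ∘ e) j = strictRank f (e j) :=
  card_equiv e (by simp)

theorem strictRank_last [LinearOrder β] {n : ℕ} (f : Fin (n + 1) → β) :
    strictRank f (Fin.last n) = #{i : Fin n | f i.castSucc < f (Fin.last n)} := by
  rw [strictRank, Fin.univ_castSuccEmb, filter_cons, if_neg (lt_irrefl _), filter_map, card_map]
  rfl

theorem le_card_filter_strictRank_lt [LinearOrder β] {k : ℕ} (f : ι → β)
    (hk : k ≤ Fintype.card ι) : k ≤ #{j | strictRank f j < k} := by
  classical
  by_contra! hS
  set S : Finset ι := {j | strictRank f j < k}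
  have hSc : Sᶜ.Nonempty := by rw [← card_pos, card_compl]; omega
  -- everything strictly below a minimiser of `f` off `S` lies in `S`, so its rank is `< k`
  obtain ⟨j₀, hj₀, hmin⟩ := Sᶜ.exists_min_image f hSc
  have hsub : ({i | f i < f j₀} : Finset ι) ⊆ S := fun i hi => by
    by_contra hiS
    exact (hmin i (mem_compl.2 hiS)).not_gt (mem_filter.1 hi).2
  exact mem_compl.1 hj₀ (mem_filter.2 ⟨mem_univ _, (card_le_card hsub).trans_lt hS⟩)

theorem measurableSet_strictRank_lt (j : ι) (k : ℕ) :
    MeasurableSet {f : ι → ℝ | strictRank f j < k} := by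
  have : Measurable fun f : ι → ℝ => strictRank f j := by
    simp only [strictRank, card_filter]
    exact Finset.measurable_sum _ fun i _ => Measurable.ite
      (measurableSet_lt (measurable_pi_apply i) (measurable_pi_apply j))
      measurable_const measurable_const
  exact this (measurableSet_lt measurable_id measurable_const)

def IsExchangeable [MeasurableSpace β] (ν : Measure (ι → β)) : Prop :=
  ∀ e : Equiv.Perm ι, ν.map (fun f => f ∘ e) = ν

theorem isExchangeable_pi [MeasurableSpace β] (μ : Measure β) [SigmaFinite μ] :
    IsExchangeable (Measure.pi fun _ : ι => μ) := by
  intro e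
  refine (Measure.pi_eq fun s hs => ?_).symm
  have hpre : (fun f : ι → β => f ∘ e) ⁻¹' Set.univ.pi s =
      Set.univ.pi fun i => s (e.symm i) := by
    ext f
    simp only [Set.mem_preimage, Set.mem_univ_pi, Function.comp_apply]
    exact ⟨fun h i => by simpa using h (e.symm i), fun h i => by simpa using h (e i)⟩
  rw [Measure.map_apply (by fun_prop) (.univ_pi hs), hpre, Measure.pi_pi]
  exact e.symm.prod_comp fun i => μ (s i)

theorem IsExchangeable.measure_strictRank_lt_eq {ν : Measure (ι → ℝ)} (hν : IsExchangeable ν)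
    (i j : ι) (k : ℕ) : ν {f | strictRank f i < k} = ν {f | strictRank f j < k} := by
  classical
  have hpre : (fun f : ι → ℝ => f ∘ Equiv.swap i j) ⁻¹' {f | strictRank f j < k} =
      {f | strictRank f i < k} := by
    ext f
    simp [strictRank_comp_equiv]
  rw [← hpre, ← Measure.map_apply (by fun_prop) (measurableSet_strictRank_lt j k), hν]

theorem IsExchangeable.natCast_div_card_le_measure_strictRank_lt {ν : Measure (ι → ℝ)}
    [IsProbabilityMeasure ν] (hν : IsExchangeable ν) {k : ℕ} (hk : k ≤ Fintype.card ι)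
    (j : ι) : (k : ℝ≥0∞) / Fintype.card ι ≤ ν {f | strictRank f j < k} := by
  refine ENNReal.div_le_of_le_mul ?_
  calc (k : ℝ≥0∞) = ∫⁻ _, (k : ℝ≥0∞) ∂ν := by simp
    _ ≤ ∫⁻ f, ∑ i, {f : ι → ℝ | strictRank f i < k}.indicator 1 f ∂ν := by
      refine lintegral_mono fun f => ?_
      simp only [Set.indicator_apply, Set.mem_ofPred_eq, Pi.one_apply, sum_boole]
      exact_mod_cast le_card_filter_strictRank_lt f hk
    _ = ∑ i, ν {f | strictRank f i < k} := by
      rw [lintegral_finsetSum _ fun i _ =>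
        measurable_one.indicator (measurableSet_strictRank_lt i k)]
      exact sum_congr rfl fun i _ => lintegral_indicator_one (measurableSet_strictRank_lt i k)
    _ = ν {f | strictRank f j < k} * Fintype.card ι := by
      simp [hν.measure_strictRank_lt_eq _ j, mul_comm]

theorem map_comp_eq_pi_of_iIndepFun_of_identDistrib {Ω γ : Type*} [MeasurableSpace Ω]
    [MeasurableSpace γ] [MeasurableSpace β] {P : Measure Ω} {Z : ι → Ω → γ}
    (hZ : ∀ i, Measurable (Z i)) (hindep : iIndepFun Z P)
    (hid : ∀ i j, IdentDistrib (Z i) (Z j) P P) {g : γ → β} (hg : Measurable g) (i₀ : ι) :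
    P.map (fun ω i => g (Z i ω)) = Measure.pi fun _ : ι => P.map fun ω => g (Z i₀ ω) := by
  have hmarg : (fun i => P.map fun ω => g (Z i ω)) = fun _ => P.map fun ω => g (Z i₀ ω) :=
    funext fun i => ((hid i i₀).comp hg).map_eq
  rw [← hmarg]
  exact (hindep.comp _ fun _ => hg).map_fun_eq_pi_map fun i => (hg.comp (hZ i)).aemeasurable

end Conformal

open Conformal in
/-- **Scaled conformal prediction coverage.**  If `(X i, U i)`, `i = 0, …, n`, are i.i.d.
pairs, `uθ` is a fixed measurable predictor, `σ` a fixed positive measurable scale function,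
`α ∈ (0,1)`, `k = ⌈(1-α)(n+1)⌉ ≤ n`, and `q` is the `k`-th smallest of the scaled calibration
scores `|U i - uθ (X i)| / σ (X i)`, then the interval `[uθ x - q σ x, uθ x + q σ x]` covers
the test response with probability at least `1 - α`. -/
theorem scaled_cp_coverage
    {Ω : Type*} [MeasurableSpace Ω] (P : Measure Ω) [IsProbabilityMeasure P]
    {d n : ℕ}
    (X : Fin (n + 1) → Ω → (Fin d → ℝ)) (U : Fin (n + 1) → Ω → ℝ)
    (hmeas : ∀ i, Measurable fun ω => (X i ω, U i ω))
    (hindep : iIndepFun (fun i ω => (X i ω, U i ω)) P)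
    (hid : ∀ i j, IdentDistrib (fun ω => (X i ω, U i ω)) (fun ω => (X j ω, U j ω)) P P)
    (uθ : (Fin d → ℝ) → ℝ) (huθ : Measurable uθ)
    (σ : (Fin d → ℝ) → ℝ) (hσmeas : Measurable σ) (hσpos : ∀ x, 0 < σ x)
    (α : ℝ) (hα : α ∈ Set.Ioo (0 : ℝ) 1)
    (k : ℕ) (hk : k = ⌈(1 - α) * (n + 1 : ℝ)⌉₊) (hkn : k ≤ n)
    (q : Ω → ℝ)
    (hq : ∀ ω, q ω =
      kthSmallest k
        (fun i : Fin n => |U i.castSucc ω - uθ (X i.castSucc ω)| / σ (X i.castSucc ω))) :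
    ENNReal.ofReal (1 - α) ≤
      P {ω | uθ (X (Fin.last n) ω) - q ω * σ (X (Fin.last n) ω) ≤ U (Fin.last n) ω ∧
             U (Fin.last n) ω ≤ uθ (X (Fin.last n) ω) + q ω * σ (X (Fin.last n) ω)} := by
  have hk₀ : 1 ≤ k := hk ▸ Nat.one_le_ceil_iff.2 (mul_pos (sub_pos.2 hα.2) (by positivity))
  set score : (Fin d → ℝ) × ℝ → ℝ := fun p => |p.2 - uθ p.1| / σ p.1
  have hscore : Measurable score :=
    ((measurable_snd.sub (huθ.comp measurable_fst)).abs).div (hσmeas.comp measurable_fst)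
  set S : Ω → Fin (n + 1) → ℝ := fun ω i => score (X i ω, U i ω)
  have hS : Measurable S := measurable_pi_lambda _ fun i => hscore.comp (hmeas i)
  set μ := P.map fun ω => score (X 0 ω, U 0 ω)
  have : IsProbabilityMeasure μ :=
    Measure.isProbabilityMeasure_map (hscore.comp (hmeas 0)).aemeasurable
  have hlaw : P.map S = Measure.pi fun _ => μ :=
    map_comp_eq_pi_of_iIndepFun_of_identDistrib hmeas hindep hid hscore 0
  have hcover : {ω | uθ (X (Fin.last n) ω) - q ω * σ (X (Fin.last n) ω) ≤ U (Fin.last n) ω ∧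
        U (Fin.last n) ω ≤ uθ (X (Fin.last n) ω) + q ω * σ (X (Fin.last n) ω)} =
      S ⁻¹' {f | strictRank f (Fin.last n) < k} := by
    ext ω
    simp only [Set.mem_ofPred_eq, Set.mem_preimage, strictRank_last,
      ← abs_sub_div_le_iff (hσpos _), hq, S, score]
    exact le_kthSmallest_iff hk₀ hkn _ _
  rw [hcover, ← Measure.map_apply hS (measurableSet_strictRank_lt _ _), hlaw]
  calc ENNReal.ofReal (1 - α) ≤ (k : ℝ≥0∞) / (n + 1 : ℕ) := by
        simpa [hk] using ENNReal.ofReal_le_natCeil_mul_div (1 - α) n.succ_pos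
    _ ≤ _ := by
        simpa using (isExchangeable_pi μ).natCast_div_card_le_measure_strictRank_lt
          (by simpa using hkn.trans n.le_succ) (Fin.last n)
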